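/- arXiv:2509.20102 — 6 statements merged into one kernel-verified Lean document; each statement's English description precedes it below -/
import Mathlib

section
/- Let θ₁ be a global maximizer of R₁, θ₂ a global maximizer of R₂, and θ̂_μ a global maximizer of R_μ. Suppose R_adv is L_adv-smooth and m_adv-strongly concave and R_real is L_real-smooth and m_real-strongly concave, with m_adv, m_real > 0. Set L₁ = β·L_adv + (1−β)·L_real, L₂ = (1−β)·L_adv + β·L_real and m_μ = μ·m_adv + (1−μ)·m_real. Then the suboptimality gap of the best interpolated model satisfies R_μ(θ̂_μ) − sup_{λ ∈ [0,1]} R_μ(θ(λ)) ≤ ( max(c₁²·L₁², c₂²·L₂²) / (2·m_μ) ) · ‖θ₂ − θ₁‖². -/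
open scoped RealInnerProductSpace

/-! Already the endpoint `θ(0) = θ₂` achieves the bound. Since `∇R₁(θ₁) = 0 = ∇R₂(θ₂)` and
`R_μ = c₁ R₁ + c₂ R₂` with `c₁ + c₂ = 1`, the gradient of `R_μ` at `θ₂` is
`c₁ (∇R₁(θ₂) - ∇R₁(θ₁))`, of norm at most `|c₁| L₁ ‖θ₂ - θ₁‖`. Strong concavity of `R_μ` with
modulus `m_μ` then bounds `R_μ(θ̂_μ) - R_μ(θ₂)` by `‖∇R_μ(θ₂)‖² / (2 m_μ)`. -/

section Gradient

variable {F : Type*} [NormedAddCommGroup F] [InnerProductSpace ℝ F] [CompleteSpace F]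
  {f g : F → ℝ} {x : F}

theorem IsLocalMax.gradient_eq_zero (h : IsLocalMax f x) : gradient f x = 0 := by
  simp [gradient, h.fderiv_eq_zero]

theorem gradient_const_mul_add_const_mul (a b : ℝ) (hf : DifferentiableAt ℝ f x)
    (hg : DifferentiableAt ℝ g x) :
    gradient (fun y => a * f y + b * g y) x = a • gradient f x + b • gradient g x := by
  refine HasGradientAt.gradient ?_
  rw [hasGradientAt_iff_hasFDerivAt]
  exact ((hf.hasFDerivAt.const_mul a).add (hg.hasFDerivAt.const_mul b)).congr_fderiv
    (by simp [gradient])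

end Gradient

theorem norm_smul_add_smul_sub_le {X E : Type*} [SeminormedAddGroup X] [SeminormedAddCommGroup E]
    [NormedSpace ℝ E] {u v : X → E} {K K' s t : ℝ}
    (hu : ∀ x y, ‖u x - u y‖ ≤ K * ‖x - y‖) (hv : ∀ x y, ‖v x - v y‖ ≤ K' * ‖x - y‖)
    (hs : 0 ≤ s) (ht : 0 ≤ t) (x y : X) :
    ‖(s • u x + t • v x) - (s • u y + t • v y)‖ ≤ (s * K + t * K') * ‖x - y‖ :=
  calc ‖(s • u x + t • v x) - (s • u y + t • v y)‖
      = ‖s • (u x - u y) + t • (v x - v y)‖ := by congr 1; module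
    _ ≤ s * ‖u x - u y‖ + t * ‖v x - v y‖ := by
        refine (norm_add_le _ _).trans_eq ?_
        rw [norm_smul_of_nonneg hs, norm_smul_of_nonneg ht]
    _ ≤ s * (K * ‖x - y‖) + t * (K' * ‖x - y‖) := by gcongr <;> apply_assumption
    _ = (s * K + t * K') * ‖x - y‖ := by ring

theorem smul_add_smul_eq_div_smul {E : Type*} [AddCommGroup E] [Module ℝ E] {β μ : ℝ}
    (hβ : 2 * β - 1 ≠ 0) {u v : E} (h : (1 - β) • u + β • v = 0) :
    μ • u + (1 - μ) • v = ((μ + β - 1) / (2 * β - 1)) • (β • u + (1 - β) • v) := by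
  set c := (μ + β - 1) / (2 * β - 1)
  have hc : c * (2 * β - 1) = μ + β - 1 := div_mul_cancel₀ _ hβ
  linear_combination (norm := module) (1 - c) • h + hc • (v - u)

section StrongConcavity

variable {F : Type*} [NormedAddCommGroup F] [InnerProductSpace ℝ F]

theorem strongConcave_const_mul_add_const_mul {f g : F → ℝ} {f' g' : F → F} {m n s t : ℝ}
    (hf : ∀ a b, f a ≤ f b + ⟪f' b, a - b⟫ - (m / 2) * ‖a - b‖ ^ 2)
    (hg : ∀ a b, g a ≤ g b + ⟪g' b, a - b⟫ - (n / 2) * ‖a - b‖ ^ 2)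
    (hs : 0 ≤ s) (ht : 0 ≤ t) (a b : F) :
    s * f a + t * g a ≤ s * f b + t * g b + ⟪s • f' b + t • g' b, a - b⟫
      - ((s * m + t * n) / 2) * ‖a - b‖ ^ 2 := by
  rw [inner_add_left, real_inner_smul_left, real_inner_smul_left]
  nlinarith [mul_le_mul_of_nonneg_left (hf a b) hs, mul_le_mul_of_nonneg_left (hg a b) ht]

theorem le_add_norm_sq_div_of_strongConcaveAt {f : F → ℝ} {g a b : F} {m : ℝ} (hm : 0 < m)
    (h : f a ≤ f b + ⟪g, a - b⟫ - (m / 2) * ‖a - b‖ ^ 2) : f a ≤ f b + ‖g‖ ^ 2 / (2 * m) := by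
  have hamgm : ⟪g, a - b⟫ - (m / 2) * ‖a - b‖ ^ 2 ≤ ‖g‖ ^ 2 / (2 * m) := by
    rw [le_div_iff₀ (by positivity)]
    nlinarith [real_inner_le_norm g (a - b), sq_nonneg (‖g‖ - m * ‖a - b‖)]
  linarith

end StrongConcavity

theorem suboptimality_of_weight_interpolation_general
    {F : Type*} [NormedAddCommGroup F] [InnerProductSpace ℝ F] [CompleteSpace F]
    (R_adv R_real : F → ℝ)
    (hadv : Differentiable ℝ R_adv) (hreal : Differentiable ℝ R_real)
    (β μ : ℝ) (hβ : β ∈ Set.Ioc (1 / 2 : ℝ) 1) (hμ : μ ∈ Set.Icc (0 : ℝ) 1)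
    (L_adv L_real m_adv m_real : ℝ) (hm_adv : 0 < m_adv) (hm_real : 0 < m_real)
    (hL_adv : ∀ a b : F, ‖gradient R_adv a - gradient R_adv b‖ ≤ L_adv * ‖a - b‖)
    (hL_real : ∀ a b : F, ‖gradient R_real a - gradient R_real b‖ ≤ L_real * ‖a - b‖)
    (hSC_adv : ∀ a b : F,
      R_adv a ≤ R_adv b + ⟪gradient R_adv b, a - b⟫ - (m_adv / 2) * ‖a - b‖ ^ 2)
    (hSC_real : ∀ a b : F,
      R_real a ≤ R_real b + ⟪gradient R_real b, a - b⟫ - (m_real / 2) * ‖a - b‖ ^ 2)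
    (R₁ R₂ Rμ : F → ℝ)
    (hR₁ : R₁ = fun θ => β * R_adv θ + (1 - β) * R_real θ)
    (hR₂ : R₂ = fun θ => (1 - β) * R_adv θ + β * R_real θ)
    (hRμ : Rμ = fun θ => μ * R_adv θ + (1 - μ) * R_real θ)
    (θ₁ θ₂ θhat : F)
    (hθ₁ : ∀ θ : F, R₁ θ ≤ R₁ θ₁)
    (hθ₂ : ∀ θ : F, R₂ θ ≤ R₂ θ₂)
    (hθhat : ∀ θ : F, Rμ θ ≤ Rμ θhat)
    (c₁ c₂ L₁ L₂ mμ : ℝ)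
    (hc₁ : c₁ = (μ + β - 1) / (2 * β - 1))
    (hL₁ : L₁ = β * L_adv + (1 - β) * L_real)
    (hmμ : mμ = μ * m_adv + (1 - μ) * m_real) :
    Rμ θhat - sSup ((fun l : ℝ => Rμ ((1 - l) • θ₂ + l • θ₁)) '' Set.Icc (0 : ℝ) 1) ≤
      (max (c₁ ^ 2 * L₁ ^ 2) (c₂ ^ 2 * L₂ ^ 2) / (2 * mμ)) * ‖θ₂ - θ₁‖ ^ 2 := by
  obtain ⟨hβ_gt, hβ_le⟩ := hβ
  obtain ⟨hμ_nonneg, hμ_le⟩ := hμ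
  set A := gradient R_adv
  set B := gradient R_real
  have hcrit₁ : β • A θ₁ + (1 - β) • B θ₁ = 0 := by
    rw [← gradient_const_mul_add_const_mul β (1 - β) (hadv θ₁) (hreal θ₁), ← hR₁]
    exact IsLocalMax.gradient_eq_zero (.of_forall hθ₁)
  have hcrit₂ : (1 - β) • A θ₂ + β • B θ₂ = 0 := by
    rw [← gradient_const_mul_add_const_mul (1 - β) β (hadv θ₂) (hreal θ₂), ← hR₂]
    exact IsLocalMax.gradient_eq_zero (.of_forall hθ₂)
  set G := μ • A θ₂ + (1 - μ) • B θ₂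
  have hG : G = c₁ • ((β • A θ₂ + (1 - β) • B θ₂) - (β • A θ₁ + (1 - β) • B θ₁)) := by
    rw [hcrit₁, sub_zero, hc₁]
    exact smul_add_smul_eq_div_smul (by linarith) hcrit₂
  have hG_sq : ‖G‖ ^ 2 ≤ max (c₁ ^ 2 * L₁ ^ 2) (c₂ ^ 2 * L₂ ^ 2) * ‖θ₂ - θ₁‖ ^ 2 := by
    have hsmooth : ‖(β • A θ₂ + (1 - β) • B θ₂) - (β • A θ₁ + (1 - β) • B θ₁)‖
        ≤ L₁ * ‖θ₂ - θ₁‖ :=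
      hL₁ ▸ norm_smul_add_smul_sub_le hL_adv hL_real (by linarith) (by linarith) θ₂ θ₁
    calc ‖G‖ ^ 2 ≤ c₁ ^ 2 * (L₁ * ‖θ₂ - θ₁‖) ^ 2 := by
          rw [hG, norm_smul, mul_pow, Real.norm_eq_abs, sq_abs]; gcongr
      _ = c₁ ^ 2 * L₁ ^ 2 * ‖θ₂ - θ₁‖ ^ 2 := by ring
      _ ≤ _ := by gcongr; exact le_max_left _ _
  have hmμ_pos : 0 < mμ := by
    rw [hmμ]; rcases le_total m_adv m_real with h | h <;> nlinarith
  have hgap : Rμ θhat ≤ Rμ θ₂ + ‖G‖ ^ 2 / (2 * mμ) :=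
    le_add_norm_sq_div_of_strongConcaveAt hmμ_pos <| by
      subst hRμ hmμ
      exact strongConcave_const_mul_add_const_mul hSC_adv hSC_real hμ_nonneg
        (sub_nonneg.2 hμ_le) θhat θ₂
  have hθ₂_le_sSup : Rμ θ₂ ≤ sSup ((fun l : ℝ => Rμ ((1 - l) • θ₂ + l • θ₁)) '' Set.Icc 0 1) :=
    le_csSup ⟨_, Set.forall_mem_image.2 fun _ _ => hθhat _⟩ ⟨0, ⟨le_rfl, zero_le_one⟩, by simp⟩
  calc Rμ θhat - sSup ((fun l : ℝ => Rμ ((1 - l) • θ₂ + l • θ₁)) '' Set.Icc 0 1)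
      ≤ ‖G‖ ^ 2 / (2 * mμ) := by linarith
    _ ≤ _ := by rw [div_mul_eq_mul_div]; gcongr

/-- Suboptimality of weight interpolation (Theorem 1 / general non-quadratic case).
If `θ₁` globally maximizes `R₁ = β·R_adv + (1−β)·R_real`, `θ₂` globally maximizes
`R₂ = (1−β)·R_adv + β·R_real`, and `θ̂_μ` globally maximizes `R_μ = μ·R_adv + (1−μ)·R_real`,
with `R_adv` being `L_adv`-smooth and `m_adv`-strongly concave and `R_real` being
`L_real`-smooth and `m_real`-strongly concave, then
`R_μ(θ̂_μ) − sup_{λ∈[0,1]} R_μ(θ(λ)) ≤ (max(c₁²L₁², c₂²L₂²) / (2m_μ)) · ‖θ₂ − θ₁‖²`. -/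
theorem suboptimality_of_weight_interpolation
    {F : Type*} [NormedAddCommGroup F] [InnerProductSpace ℝ F] [CompleteSpace F]
    (R_adv R_real : F → ℝ)
    (hadv : Differentiable ℝ R_adv) (hreal : Differentiable ℝ R_real)
    (β μ : ℝ) (hβ : β ∈ Set.Ioc (1 / 2 : ℝ) 1) (hμ : μ ∈ Set.Icc (0 : ℝ) 1)
    (L_adv L_real m_adv m_real : ℝ) (hm_adv : 0 < m_adv) (hm_real : 0 < m_real)
    (hL_adv : ∀ a b : F, ‖gradient R_adv a - gradient R_adv b‖ ≤ L_adv * ‖a - b‖)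
    (hL_real : ∀ a b : F, ‖gradient R_real a - gradient R_real b‖ ≤ L_real * ‖a - b‖)
    (hSC_adv : ∀ a b : F,
      R_adv a ≤ R_adv b + ⟪gradient R_adv b, a - b⟫ - (m_adv / 2) * ‖a - b‖ ^ 2)
    (hSC_real : ∀ a b : F,
      R_real a ≤ R_real b + ⟪gradient R_real b, a - b⟫ - (m_real / 2) * ‖a - b‖ ^ 2)
    (R₁ R₂ Rμ : F → ℝ)
    (hR₁ : R₁ = fun θ => β * R_adv θ + (1 - β) * R_real θ)
    (hR₂ : R₂ = fun θ => (1 - β) * R_adv θ + β * R_real θ)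
    (hRμ : Rμ = fun θ => μ * R_adv θ + (1 - μ) * R_real θ)
    (θ₁ θ₂ θhat : F)
    (hθ₁ : ∀ θ : F, R₁ θ ≤ R₁ θ₁)
    (hθ₂ : ∀ θ : F, R₂ θ ≤ R₂ θ₂)
    (hθhat : ∀ θ : F, Rμ θ ≤ Rμ θhat)
    (c₁ c₂ L₁ L₂ mμ : ℝ)
    (hc₁ : c₁ = (μ + β - 1) / (2 * β - 1)) (hc₂ : c₂ = (β - μ) / (2 * β - 1))
    (hL₁ : L₁ = β * L_adv + (1 - β) * L_real) (hL₂ : L₂ = (1 - β) * L_adv + β * L_real)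
    (hmμ : mμ = μ * m_adv + (1 - μ) * m_real) :
    Rμ θhat - sSup ((fun l : ℝ => Rμ ((1 - l) • θ₂ + l • θ₁)) '' Set.Icc (0 : ℝ) 1) ≤
      (max (c₁ ^ 2 * L₁ ^ 2) (c₂ ^ 2 * L₂ ^ 2) / (2 * mμ)) * ‖θ₂ - θ₁‖ ^ 2 :=
  suboptimality_of_weight_interpolation_general R_adv R_real hadv hreal β μ hβ hμ L_adv L_real m_adv
    m_real hm_adv hm_real hL_adv hL_real hSC_adv hSC_real R₁ R₂ Rμ hR₁ hR₂ hRμ θ₁ θ₂ θhat hθ₁ hθ₂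
    hθhat c₁ c₂ L₁ L₂ mμ hc₁ hL₁ hmμ
end

section
/- Let θ₁, θ₂, θ̂_μ ∈ F satisfy ∇R₁(θ₁) = 0, ∇R₂(θ₂) = 0, and R_μ(θ) ≤ R_μ(θ̂_μ) for all θ. Suppose R_adv is L_adv-smooth and m_adv-strongly concave and R_real is L_real-smooth and m_real-strongly concave, with m_adv, m_real > 0. Set L₁ = β·L_adv + (1−β)·L_real, L₂ = (1−β)·L_adv + β·L_real and m_μ = μ·m_adv + (1−μ)·m_real. Then for every λ ∈ [0,1], R_μ(θ̂_μ) − R_μ(θ(λ)) ≤ ( |c₁|·L₁·(1−λ) + |c₂|·L₂·λ )² · ‖θ₂ − θ₁‖² / (2·m_μ). -/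
open scoped RealInnerProductSpace

/-!
As a convex combination of the two rewards, `R_μ` is `m_μ`-strongly concave, and completing the
square in the strong-concavity inequality at `x` gives `R_μ(y) − R_μ(x) ≤ ‖∇R_μ(x)‖² / (2 m_μ)` for
every `y`. Since `β ≠ 1/2`, `R_μ = c₁ R₁ + c₂ R₂`. Each `∇R_i` is `L_i`-Lipschitz and vanishes at
`θ_i`, so `‖∇R_i(θ(λ))‖ ≤ L_i ‖θ(λ) − θ_i‖`, and these distances are `(1 − λ) ‖θ₂ − θ₁‖` and
`λ ‖θ₂ − θ₁‖`.
-/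

section

variable {F : Type*} [NormedAddCommGroup F] [InnerProductSpace ℝ F]

theorem real_inner_sub_mul_norm_sq_le (u v : F) {m : ℝ} (hm : 0 < m) :
    ⟪u, v⟫ - m / 2 * ‖v‖ ^ 2 ≤ ‖u‖ ^ 2 / (2 * m) := by
  rw [le_div_iff₀ (by positivity)]
  nlinarith [real_inner_le_norm u v, sq_nonneg (‖u‖ - m * ‖v‖)]

theorem smul_add_one_sub_smul_eq_expert_combination {E : Type*} [AddCommGroup E] [Module ℝ E]
    {β : ℝ} (hβ : 2 * β - 1 ≠ 0) (μ : ℝ) (u v : E) :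
    μ • u + (1 - μ) • v =
      ((μ + β - 1) / (2 * β - 1)) • (β • u + (1 - β) • v) +
        ((β - μ) / (2 * β - 1)) • ((1 - β) • u + β • v) := by
  have h := mul_inv_cancel₀ hβ
  rw [div_eq_mul_inv, div_eq_mul_inv]
  match_scalars
  · linear_combination (-μ) * h
  · linear_combination (μ - 1) * h

theorem norm_one_sub_smul_add_smul_sub_left {E : Type*} [NormedAddCommGroup E] [NormedSpace ℝ E]
    (p q : E) (l : ℝ) : ‖(1 - l) • p + l • q - p‖ = |l| * ‖p - q‖ := by
  rw [← AffineMap.lineMap_apply_module, ← dist_eq_norm, dist_lineMap_left, dist_eq_norm,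
    Real.norm_eq_abs]

theorem norm_one_sub_smul_add_smul_sub_right {E : Type*} [NormedAddCommGroup E]
    [NormedSpace ℝ E] (p q : E) (l : ℝ) : ‖(1 - l) • p + l • q - q‖ = |1 - l| * ‖p - q‖ := by
  rw [← AffineMap.lineMap_apply_module, ← dist_eq_norm, dist_lineMap_right, dist_eq_norm,
    Real.norm_eq_abs]

variable [CompleteSpace F]

def GradientLipschitzWith (L : ℝ) (f : F → ℝ) : Prop :=
  ∀ a b, ‖gradient f a - gradient f b‖ ≤ L * ‖a - b‖

def FirstOrderStrongConcave (m : ℝ) (f : F → ℝ) : Prop :=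
  ∀ a b, f a ≤ f b + ⟪gradient f b, a - b⟫ - m / 2 * ‖a - b‖ ^ 2

theorem gradient_linear_combination (a b : ℝ) {f g : F → ℝ} {x : F}
    (hf : DifferentiableAt ℝ f x) (hg : DifferentiableAt ℝ g x) :
    gradient (fun y => a * f y + b * g y) x = a • gradient f x + b • gradient g x := by
  refine HasGradientAt.gradient ?_
  rw [hasGradientAt_iff_hasFDerivAt, map_add, map_smul, map_smul, toDual_gradient,
    toDual_gradient]
  exact (hf.hasFDerivAt.const_mul a).add (hg.hasFDerivAt.const_mul b)

namespace GradientLipschitzWith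

variable {L L' a b : ℝ} {f g : F → ℝ}

theorem linear_combination (hf : GradientLipschitzWith L f) (hg : GradientLipschitzWith L' g)
    (ha : 0 ≤ a) (hb : 0 ≤ b) (hfd : Differentiable ℝ f) (hgd : Differentiable ℝ g) :
    GradientLipschitzWith (a * L + b * L') (fun y => a * f y + b * g y) := by
  intro x y
  rw [gradient_linear_combination a b (hfd x) (hgd x),
    gradient_linear_combination a b (hfd y) (hgd y)]
  calc ‖a • gradient f x + b • gradient g x - (a • gradient f y + b • gradient g y)‖
      = ‖a • (gradient f x - gradient f y) + b • (gradient g x - gradient g y)‖ := by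
        congr 1; module
    _ ≤ a * ‖gradient f x - gradient f y‖ + b * ‖gradient g x - gradient g y‖ :=
        (norm_add_le _ _).trans_eq (by rw [norm_smul_of_nonneg ha, norm_smul_of_nonneg hb])
    _ ≤ a * (L * ‖x - y‖) + b * (L' * ‖x - y‖) := by gcongr; exacts [hf x y, hg x y]
    _ = (a * L + b * L') * ‖x - y‖ := by ring

theorem norm_gradient_le_of_gradient_eq_zero (hf : GradientLipschitzWith L f) {x₀ : F}
    (h₀ : gradient f x₀ = 0) (x : F) : ‖gradient f x‖ ≤ L * ‖x - x₀‖ := by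
  simpa [h₀] using hf x x₀

end GradientLipschitzWith

namespace FirstOrderStrongConcave

variable {m m' a b : ℝ} {f g : F → ℝ}

theorem linear_combination (hf : FirstOrderStrongConcave m f) (hg : FirstOrderStrongConcave m' g)
    (ha : 0 ≤ a) (hb : 0 ≤ b) (hfd : Differentiable ℝ f) (hgd : Differentiable ℝ g) :
    FirstOrderStrongConcave (a * m + b * m') (fun y => a * f y + b * g y) := by
  intro x y
  rw [gradient_linear_combination a b (hfd y) (hgd y), inner_add_left, real_inner_smul_left,
    real_inner_smul_left]
  linarith [mul_le_mul_of_nonneg_left (hf x y) ha, mul_le_mul_of_nonneg_left (hg x y) hb]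

theorem sub_le_norm_gradient_sq_div (hf : FirstOrderStrongConcave m f) (hm : 0 < m) (x y : F) :
    f y - f x ≤ ‖gradient f x‖ ^ 2 / (2 * m) := by
  linarith [hf y x, real_inner_sub_mul_norm_sq_le (gradient f x) (y - x) hm]

end FirstOrderStrongConcave

end

theorem pointwise_suboptimality_along_interpolation_general
    {F : Type*} [NormedAddCommGroup F] [InnerProductSpace ℝ F] [CompleteSpace F]
    (R_adv R_real : F → ℝ)
    (hadv : Differentiable ℝ R_adv) (hreal : Differentiable ℝ R_real)
    (β μ : ℝ) (hβ : β ∈ Set.Ioc (1 / 2 : ℝ) 1) (hμ : μ ∈ Set.Icc (0 : ℝ) 1)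
    (L_adv L_real m_adv m_real : ℝ) (hm_adv : 0 < m_adv) (hm_real : 0 < m_real)
    (hL_adv : ∀ a b : F, ‖gradient R_adv a - gradient R_adv b‖ ≤ L_adv * ‖a - b‖)
    (hL_real : ∀ a b : F, ‖gradient R_real a - gradient R_real b‖ ≤ L_real * ‖a - b‖)
    (hSC_adv : ∀ a b : F,
      R_adv a ≤ R_adv b + ⟪gradient R_adv b, a - b⟫ - (m_adv / 2) * ‖a - b‖ ^ 2)
    (hSC_real : ∀ a b : F,
      R_real a ≤ R_real b + ⟪gradient R_real b, a - b⟫ - (m_real / 2) * ‖a - b‖ ^ 2)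
    (R₁ R₂ Rμ : F → ℝ)
    (hR₁ : R₁ = fun θ => β * R_adv θ + (1 - β) * R_real θ)
    (hR₂ : R₂ = fun θ => (1 - β) * R_adv θ + β * R_real θ)
    (hRμ : Rμ = fun θ => μ * R_adv θ + (1 - μ) * R_real θ)
    (θ₁ θ₂ θhat : F)
    (hθ₁ : gradient R₁ θ₁ = 0)
    (hθ₂ : gradient R₂ θ₂ = 0)
    (c₁ c₂ L₁ L₂ mμ : ℝ)
    (hc₁ : c₁ = (μ + β - 1) / (2 * β - 1)) (hc₂ : c₂ = (β - μ) / (2 * β - 1))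
    (hL₁ : L₁ = β * L_adv + (1 - β) * L_real) (hL₂ : L₂ = (1 - β) * L_adv + β * L_real)
    (hmμ : mμ = μ * m_adv + (1 - μ) * m_real)
    (l : ℝ) (hl : l ∈ Set.Icc (0 : ℝ) 1) :
    Rμ θhat - Rμ ((1 - l) • θ₂ + l • θ₁) ≤
      (|c₁| * L₁ * (1 - l) + |c₂| * L₂ * l) ^ 2 * ‖θ₂ - θ₁‖ ^ 2 / (2 * mμ) := by
  set x := (1 - l) • θ₂ + l • θ₁
  have hβ_nonneg : 0 ≤ β := by linarith [hβ.1]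
  have hG₁ : ‖gradient R₁ x‖ ≤ L₁ * ‖x - θ₁‖ := by
    subst R₁ L₁
    exact (GradientLipschitzWith.linear_combination hL_adv hL_real hβ_nonneg
      (sub_nonneg.2 hβ.2) hadv hreal).norm_gradient_le_of_gradient_eq_zero hθ₁ x
  have hG₂ : ‖gradient R₂ x‖ ≤ L₂ * ‖x - θ₂‖ := by
    subst R₂ L₂
    exact (GradientLipschitzWith.linear_combination hL_adv hL_real (sub_nonneg.2 hβ.2)
      hβ_nonneg hadv hreal).norm_gradient_le_of_gradient_eq_zero hθ₂ x
  have hgrad : gradient Rμ x = c₁ • gradient R₁ x + c₂ • gradient R₂ x := by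
    subst R₁ R₂ Rμ c₁ c₂
    simp only [gradient_linear_combination _ _ (hadv x) (hreal x)]
    exact smul_add_one_sub_smul_eq_expert_combination (by linarith [hβ.1]) _ _ _
  have hgrad_le : ‖gradient Rμ x‖ ≤ (|c₁| * L₁ * (1 - l) + |c₂| * L₂ * l) * ‖θ₂ - θ₁‖ :=
    calc ‖gradient Rμ x‖ ≤ |c₁| * ‖gradient R₁ x‖ + |c₂| * ‖gradient R₂ x‖ := by
          rw [hgrad]; exact norm_add_le_of_le (norm_smul_le _ _) (norm_smul_le _ _)
      _ ≤ |c₁| * (L₁ * ‖x - θ₁‖) + |c₂| * (L₂ * ‖x - θ₂‖) := by gcongr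
      _ = (|c₁| * L₁ * (1 - l) + |c₂| * L₂ * l) * ‖θ₂ - θ₁‖ := by
          rw [norm_one_sub_smul_add_smul_sub_right, norm_one_sub_smul_add_smul_sub_left,
            abs_of_nonneg (sub_nonneg.2 hl.2), abs_of_nonneg hl.1]
          ring
  have hSC : FirstOrderStrongConcave mμ Rμ := by
    subst Rμ mμ
    exact FirstOrderStrongConcave.linear_combination hSC_adv hSC_real hμ.1 (sub_nonneg.2 hμ.2)
      hadv hreal
  have hmμ_pos : 0 < mμ := by
    simpa [hmμ] using convex_Ioi (0 : ℝ) hm_adv hm_real hμ.1 (sub_nonneg.2 hμ.2)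
      (add_sub_cancel _ _)
  calc Rμ θhat - Rμ x ≤ ‖gradient Rμ x‖ ^ 2 / (2 * mμ) :=
        hSC.sub_le_norm_gradient_sq_div hmμ_pos x θhat
    _ ≤ ((|c₁| * L₁ * (1 - l) + |c₂| * L₂ * l) * ‖θ₂ - θ₁‖) ^ 2 / (2 * mμ) := by gcongr
    _ = (|c₁| * L₁ * (1 - l) + |c₂| * L₂ * l) ^ 2 * ‖θ₂ - θ₁‖ ^ 2 / (2 * mμ) := by ring

/-- Pointwise suboptimality bound along the interpolation path: if `∇R₁(θ₁) = 0`,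
`∇R₂(θ₂) = 0`, and `θ̂_μ` globally maximizes `R_μ`, with `R_adv` being `L_adv`-smooth and
`m_adv`-strongly concave and `R_real` being `L_real`-smooth and `m_real`-strongly concave,
then for every `λ ∈ [0,1]`,
`R_μ(θ̂_μ) − R_μ(θ(λ)) ≤ (|c₁|·L₁·(1−λ) + |c₂|·L₂·λ)² · ‖θ₂ − θ₁‖² / (2m_μ)`. -/
theorem pointwise_suboptimality_along_interpolation
    {F : Type*} [NormedAddCommGroup F] [InnerProductSpace ℝ F] [CompleteSpace F]
    (R_adv R_real : F → ℝ)
    (hadv : Differentiable ℝ R_adv) (hreal : Differentiable ℝ R_real)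
    (β μ : ℝ) (hβ : β ∈ Set.Ioc (1 / 2 : ℝ) 1) (hμ : μ ∈ Set.Icc (0 : ℝ) 1)
    (L_adv L_real m_adv m_real : ℝ) (hm_adv : 0 < m_adv) (hm_real : 0 < m_real)
    (hL_adv : ∀ a b : F, ‖gradient R_adv a - gradient R_adv b‖ ≤ L_adv * ‖a - b‖)
    (hL_real : ∀ a b : F, ‖gradient R_real a - gradient R_real b‖ ≤ L_real * ‖a - b‖)
    (hSC_adv : ∀ a b : F,
      R_adv a ≤ R_adv b + ⟪gradient R_adv b, a - b⟫ - (m_adv / 2) * ‖a - b‖ ^ 2)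
    (hSC_real : ∀ a b : F,
      R_real a ≤ R_real b + ⟪gradient R_real b, a - b⟫ - (m_real / 2) * ‖a - b‖ ^ 2)
    (R₁ R₂ Rμ : F → ℝ)
    (hR₁ : R₁ = fun θ => β * R_adv θ + (1 - β) * R_real θ)
    (hR₂ : R₂ = fun θ => (1 - β) * R_adv θ + β * R_real θ)
    (hRμ : Rμ = fun θ => μ * R_adv θ + (1 - μ) * R_real θ)
    (θ₁ θ₂ θhat : F)
    (hθ₁ : gradient R₁ θ₁ = 0)
    (hθ₂ : gradient R₂ θ₂ = 0)
    (hθhat : ∀ θ : F, Rμ θ ≤ Rμ θhat)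
    (c₁ c₂ L₁ L₂ mμ : ℝ)
    (hc₁ : c₁ = (μ + β - 1) / (2 * β - 1)) (hc₂ : c₂ = (β - μ) / (2 * β - 1))
    (hL₁ : L₁ = β * L_adv + (1 - β) * L_real) (hL₂ : L₂ = (1 - β) * L_adv + β * L_real)
    (hmμ : mμ = μ * m_adv + (1 - μ) * m_real)
    (l : ℝ) (hl : l ∈ Set.Icc (0 : ℝ) 1) :
    Rμ θhat - Rμ ((1 - l) • θ₂ + l • θ₁) ≤
      (|c₁| * L₁ * (1 - l) + |c₂| * L₂ * l) ^ 2 * ‖θ₂ - θ₁‖ ^ 2 / (2 * mμ) :=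
  pointwise_suboptimality_along_interpolation_general R_adv R_real hadv hreal β μ hβ hμ L_adv L_real
    m_adv m_real hm_adv hm_real hL_adv hL_real hSC_adv hSC_real R₁ R₂ Rμ hR₁ hR₂ hRμ θ₁ θ₂ θhat hθ₁
    hθ₂ c₁ c₂ L₁ L₂ mμ hc₁ hc₂ hL₁ hL₂ hmμ l hl
end

section
/- In the equal-curvature quadratic setting with β ∈ (1/2, 1] and μ ∈ [0,1], the distance from the user optimum to the interpolation segment satisfies: the minimum over λ ∈ [0,1] of ‖θ(λ) − θ̂_μ‖ equals |μ − clip(μ, 1−β, β)| · ‖θ*_adv − θ*_real‖, and this minimum is attained at λ = clip((μ+β−1)/(2β−1), 0, 1). -/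
/-- In the equal-curvature quadratic setting with `β ∈ (1/2, 1]` and `μ ∈ [0,1]`, the
distance from the user optimum to the interpolation segment satisfies: the minimum over
`λ ∈ [0,1]` of `‖θ(λ) − θ̂_μ‖` equals `|μ − clip(μ, 1−β, β)| · ‖θ*_adv − θ*_real‖`, attained
at `λ = clip((μ+β−1)/(2β−1), 0, 1)`, where `clip(x, a, b) = max(a, min(b, x))`. -/
theorem equal_curvature_distance_to_segment
    {F : Type*} [NormedAddCommGroup F] [InnerProductSpace ℝ F]
    (θadv θreal : F) (Cadv Creal η : ℝ) (hη : 0 < η)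
    (R_adv R_real : F → ℝ)
    (hRadv : R_adv = fun θ => Cadv - (η / 2) * ‖θ - θadv‖ ^ 2)
    (hRreal : R_real = fun θ => Creal - (η / 2) * ‖θ - θreal‖ ^ 2)
    (β μ : ℝ) (hβ : β ∈ Set.Ioc (1 / 2 : ℝ) 1) (hμ : μ ∈ Set.Icc (0 : ℝ) 1)
    (θ₁ θ₂ θhat : F)
    (hθ₁ : θ₁ = β • θadv + (1 - β) • θreal)
    (hθ₂ : θ₂ = (1 - β) • θadv + β • θreal)
    (hθhat : θhat = μ • θadv + (1 - μ) • θreal)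
    (Θ : ℝ → F) (hΘ : Θ = fun l => (1 - l) • θ₂ + l • θ₁)
    (lstar : ℝ) (hlstar : lstar = max 0 (min 1 ((μ + β - 1) / (2 * β - 1)))) :
    lstar ∈ Set.Icc (0 : ℝ) 1 ∧
      ‖Θ lstar - θhat‖ = |μ - max (1 - β) (min β μ)| * ‖θadv - θreal‖ ∧
      ∀ l ∈ Set.Icc (0 : ℝ) 1, ‖Θ lstar - θhat‖ ≤ ‖Θ l - θhat‖ := by
  obtain ⟨hβ1, hβ2⟩ := hβ
  obtain ⟨hμ0, hμ1⟩ := hμ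
  have ht : (0:ℝ) < 2 * β - 1 := by linarith
  have key : ∀ l : ℝ, Θ l - θhat = ((1 - β) + l * (2 * β - 1) - μ) • (θadv - θreal) := by
    intro l
    subst hΘ hθ₁ hθ₂ hθhat
    simp only
    module
  have keyn : ∀ l : ℝ, ‖Θ l - θhat‖ = |(1 - β) + l * (2 * β - 1) - μ| * ‖θadv - θreal‖ := by
    intro l
    rw [key l, norm_smul, Real.norm_eq_abs]
  have hmem : lstar ∈ Set.Icc (0 : ℝ) 1 := by
    constructor
    · rw [hlstar]; exact le_max_left _ _
    · rw [hlstar]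
      apply max_le (by norm_num) (min_le_left _ _)
  refine ⟨hmem, ?_, ?_⟩
  · rw [keyn]
    congr 1
    rcases le_or_gt μ (1 - β) with h1 | h1
    · have hls : lstar = 0 := by
        rw [hlstar]
        have hx : (μ + β - 1) / (2 * β - 1) ≤ 0 :=
          div_nonpos_of_nonpos_of_nonneg (by linarith) (by linarith)
        rw [min_eq_right (by linarith), max_eq_left hx]
      have hmin : min β μ = μ := min_eq_right (by linarith)
      rw [hls, hmin, max_eq_left h1]
      rw [abs_of_nonneg (by linarith), abs_of_nonpos (by linarith)]
      ring
    · rcases le_or_gt β μ with h2 | h2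
      · have hls : lstar = 1 := by
          rw [hlstar]
          have hx : (1:ℝ) ≤ (μ + β - 1) / (2 * β - 1) := by
            rw [le_div_iff₀ ht]; linarith
          rw [min_eq_left hx, max_eq_right (by norm_num)]
        have hmin : min β μ = β := min_eq_left h2
        rw [hls, hmin, max_eq_right (by linarith)]
        rw [abs_of_nonpos (by linarith), abs_of_nonneg (by linarith)]
        ring
      · have hx0 : (0:ℝ) ≤ (μ + β - 1) / (2 * β - 1) :=
          div_nonneg (by linarith) (by linarith)
        have hx1 : (μ + β - 1) / (2 * β - 1) ≤ 1 := by
          rw [div_le_one ht]; linarith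
        have hls : lstar = (μ + β - 1) / (2 * β - 1) := by
          rw [hlstar, min_eq_right hx1, max_eq_right hx0]
        have hmin : min β μ = μ := min_eq_right (by linarith)
        rw [hls, hmin, max_eq_right (by linarith)]
        rw [div_mul_cancel₀ _ (ne_of_gt ht)]
        simp
  · intro l hl
    obtain ⟨hl0, hl1⟩ := hl
    rw [keyn, keyn]
    apply mul_le_mul_of_nonneg_right _ (norm_nonneg _)
    rcases le_or_gt μ (1 - β) with h1 | h1
    · have hls : lstar = 0 := by
        rw [hlstar]
        have hx : (μ + β - 1) / (2 * β - 1) ≤ 0 :=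
          div_nonpos_of_nonpos_of_nonneg (by linarith) (by linarith)
        rw [min_eq_right (by linarith), max_eq_left hx]
      rw [hls]
      rw [abs_of_nonneg (by linarith), abs_of_nonneg (by nlinarith)]
      nlinarith
    · rcases le_or_gt β μ with h2 | h2
      · have hls : lstar = 1 := by
          rw [hlstar]
          have hx : (1:ℝ) ≤ (μ + β - 1) / (2 * β - 1) := by
            rw [le_div_iff₀ ht]; linarith
          rw [min_eq_left hx, max_eq_right (by norm_num)]
        rw [hls]
        rw [abs_of_nonpos (by linarith), abs_of_nonpos (by nlinarith)]
        nlinarith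
      · have hx0 : (0:ℝ) ≤ (μ + β - 1) / (2 * β - 1) :=
          div_nonneg (by linarith) (by linarith)
        have hx1 : (μ + β - 1) / (2 * β - 1) ≤ 1 := by
          rw [div_le_one ht]; linarith
        have hls : lstar = (μ + β - 1) / (2 * β - 1) := by
          rw [hlstar, min_eq_right hx1, max_eq_right hx0]
        rw [hls, div_mul_cancel₀ _ (ne_of_gt ht)]
        simp [abs_nonneg]
end

section
/- In the equal-curvature quadratic setting with β ∈ (1/2, 1], if the user preference satisfies 1−β ≤ μ ≤ β, then taking λ = (μ+β−1)/(2β−1) ∈ [0,1] yields exact recovery of the user optimum: θ(λ) = θ̂_μ; consequently the interpolated family is exactly optimal, i.e., the maximum over λ ∈ [0,1] of R_μ(θ(λ)) equals R_μ(θ̂_μ). -/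
/-!
Both rewards have the same curvature, so their `μ`-mixture is again a quadratic with curvature
`η`, centred at the mixed optimum `θ̂_μ = μ θ*_adv + (1 - μ) θ*_real`. The interpolation path is the
segment from `θ₂` to `θ₁`, which is the part of the line through `θ*_adv, θ*_real` with weight on
`θ*_adv` ranging over `[1 - β, β]`; when `μ` lies in that range the path passes through `θ̂_μ`
itself, at `λ = (μ + β - 1) / (2β - 1)`.
-/

open Set

section MixtureOfQuadratics

variable {F : Type*} [NormedAddCommGroup F] [InnerProductSpace ℝ F]

/-- The bias–variance decomposition of a two-point mixture around its mean. -/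
theorem mul_norm_sub_sq_add_mul_norm_sub_sq (x a b : F) (μ : ℝ) :
    μ * ‖x - a‖ ^ 2 + (1 - μ) * ‖x - b‖ ^ 2
      = ‖x - (μ • a + (1 - μ) • b)‖ ^ 2 + μ * (1 - μ) * ‖a - b‖ ^ 2 := by
  set c := μ • a + (1 - μ) • b
  have hxa : x - a = (x - c) - (1 - μ) • (a - b) := by module
  have hxb : x - b = (x - c) + μ • (a - b) := by module
  rw [hxa, hxb, norm_sub_sq_real, norm_add_sq_real, real_inner_smul_right, real_inner_smul_right,
    norm_smul, norm_smul, Real.norm_eq_abs, Real.norm_eq_abs, mul_pow, mul_pow, sq_abs, sq_abs]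
  ring

theorem mixture_quadratic_eq (x a b : F) (μ C₁ C₂ η : ℝ) :
    μ * (C₁ - η / 2 * ‖x - a‖ ^ 2) + (1 - μ) * (C₂ - η / 2 * ‖x - b‖ ^ 2)
      = μ * C₁ + (1 - μ) * C₂ - η / 2 * μ * (1 - μ) * ‖a - b‖ ^ 2
        - η / 2 * ‖x - (μ • a + (1 - μ) • b)‖ ^ 2 := by
  linear_combination (-η / 2) * mul_norm_sub_sq_add_mul_norm_sub_sq x a b μ

theorem mixture_quadratic_le_at_mean (x a b : F) (μ C₁ C₂ : ℝ) {η : ℝ} (hη : 0 ≤ η) :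
    μ * (C₁ - η / 2 * ‖x - a‖ ^ 2) + (1 - μ) * (C₂ - η / 2 * ‖x - b‖ ^ 2)
      ≤ μ * (C₁ - η / 2 * ‖μ • a + (1 - μ) • b - a‖ ^ 2)
        + (1 - μ) * (C₂ - η / 2 * ‖μ • a + (1 - μ) • b - b‖ ^ 2) := by
  rw [mixture_quadratic_eq, mixture_quadratic_eq, sub_self, norm_zero]
  have : 0 ≤ η / 2 * ‖x - (μ • a + (1 - μ) • b)‖ ^ 2 := by positivity
  linarith

end MixtureOfQuadratics

section Interpolation

theorem interpolation_weight_mem_Icc {β μ : ℝ} (hβ : 1 / 2 < β) (hlo : 1 - β ≤ μ) (hhi : μ ≤ β) :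
    (μ + β - 1) / (2 * β - 1) ∈ Icc (0 : ℝ) 1 := by
  have hpos : 0 < 2 * β - 1 := by linarith
  exact ⟨div_nonneg (by linarith) hpos.le, (div_le_one hpos).2 (by linarith)⟩

theorem interpolation_eq_mixture {E : Type*} [AddCommGroup E] [Module ℝ E] (a b : E) {β : ℝ}
    (hβ : 1 / 2 < β) (μ : ℝ) :
    (1 - (μ + β - 1) / (2 * β - 1)) • ((1 - β) • a + β • b)
        + ((μ + β - 1) / (2 * β - 1)) • (β • a + (1 - β) • b)
      = μ • a + (1 - μ) • b := by
  set l := (μ + β - 1) / (2 * β - 1)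
  have hl : l * (2 * β - 1) = μ + β - 1 := div_mul_cancel₀ _ (by linarith)
  linear_combination (norm := module) hl • (a - b)

end Interpolation

theorem equal_curvature_exact_recovery_general
    {F : Type*} [NormedAddCommGroup F] [InnerProductSpace ℝ F]
    (θadv θreal : F) (Cadv Creal η : ℝ) (hη : 0 < η)
    (R_adv R_real : F → ℝ)
    (hRadv : R_adv = fun θ => Cadv - (η / 2) * ‖θ - θadv‖ ^ 2)
    (hRreal : R_real = fun θ => Creal - (η / 2) * ‖θ - θreal‖ ^ 2)
    (β μ : ℝ) (hβ : β ∈ Set.Ioc (1 / 2 : ℝ) 1)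
    (hrange : 1 - β ≤ μ ∧ μ ≤ β)
    (Rμ : F → ℝ) (hRμ : Rμ = fun θ => μ * R_adv θ + (1 - μ) * R_real θ)
    (θ₁ θ₂ θhat : F)
    (hθ₁ : θ₁ = β • θadv + (1 - β) • θreal)
    (hθ₂ : θ₂ = (1 - β) • θadv + β • θreal)
    (hθhat : θhat = μ • θadv + (1 - μ) • θreal)
    (Θ : ℝ → F) (hΘ : Θ = fun l => (1 - l) • θ₂ + l • θ₁)
    (l : ℝ) (hl : l = (μ + β - 1) / (2 * β - 1)) :
    l ∈ Set.Icc (0 : ℝ) 1 ∧ Θ l = θhat ∧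
      IsGreatest ((fun t => Rμ (Θ t)) '' Set.Icc (0 : ℝ) 1) (Rμ θhat) := by
  subst hRadv hRreal hRμ hθ₁ hθ₂ hθhat hΘ hl
  have hmem := interpolation_weight_mem_Icc hβ.1 hrange.1 hrange.2
  have hrecover := interpolation_eq_mixture θadv θreal hβ.1 μ
  refine ⟨hmem, hrecover, ⟨_, hmem, by simp only [hrecover]⟩, ?_⟩
  rintro _ ⟨t, -, rfl⟩
  exact mixture_quadratic_le_at_mean _ θadv θreal μ Cadv Creal hη.le

/-- In the equal-curvature quadratic setting with `β ∈ (1/2, 1]`, if `1−β ≤ μ ≤ β`, then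
`λ = (μ+β−1)/(2β−1) ∈ [0,1]` yields exact recovery of the user optimum, `θ(λ) = θ̂_μ`;
consequently the interpolated family is exactly optimal:
`max_{λ∈[0,1]} R_μ(θ(λ)) = R_μ(θ̂_μ)`. -/
theorem equal_curvature_exact_recovery
    {F : Type*} [NormedAddCommGroup F] [InnerProductSpace ℝ F]
    (θadv θreal : F) (Cadv Creal η : ℝ) (hη : 0 < η)
    (R_adv R_real : F → ℝ)
    (hRadv : R_adv = fun θ => Cadv - (η / 2) * ‖θ - θadv‖ ^ 2)
    (hRreal : R_real = fun θ => Creal - (η / 2) * ‖θ - θreal‖ ^ 2)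
    (β μ : ℝ) (hβ : β ∈ Set.Ioc (1 / 2 : ℝ) 1) (hμ : μ ∈ Set.Icc (0 : ℝ) 1)
    (hrange : 1 - β ≤ μ ∧ μ ≤ β)
    (Rμ : F → ℝ) (hRμ : Rμ = fun θ => μ * R_adv θ + (1 - μ) * R_real θ)
    (θ₁ θ₂ θhat : F)
    (hθ₁ : θ₁ = β • θadv + (1 - β) • θreal)
    (hθ₂ : θ₂ = (1 - β) • θadv + β • θreal)
    (hθhat : θhat = μ • θadv + (1 - μ) • θreal)
    (Θ : ℝ → F) (hΘ : Θ = fun l => (1 - l) • θ₂ + l • θ₁)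
    (l : ℝ) (hl : l = (μ + β - 1) / (2 * β - 1)) :
    l ∈ Set.Icc (0 : ℝ) 1 ∧ Θ l = θhat ∧
      IsGreatest ((fun t => Rμ (Θ t)) '' Set.Icc (0 : ℝ) 1) (Rμ θhat) :=
  equal_curvature_exact_recovery_general θadv θreal Cadv Creal η hη R_adv R_real hRadv hRreal β μ hβ
    hrange Rμ hRμ θ₁ θ₂ θhat hθ₁ hθ₂ hθhat Θ hΘ l hl
end

section
/- In the equal-curvature quadratic setting with β ∈ (1/2, 1] and μ ∈ [0,1], the suboptimality gap of the mixed-expert model is exactly R_μ(θ̂_μ) − max_{λ ∈ [0,1]} R_μ(θ(λ)) = (η/2) · (μ − clip(μ, 1−β, β))² · ‖θ*_adv − θ*_real‖², where the maximum over λ ∈ [0,1] is attained. -/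
/-- Suboptimality gap for quadratic rewards: in the equal-curvature quadratic setting with
`β ∈ (1/2, 1]` and `μ ∈ [0,1]`, the maximum of `R_μ(θ(λ))` over `λ ∈ [0,1]` is attained,
and the gap is exactly
`R_μ(θ̂_μ) − max_{λ∈[0,1]} R_μ(θ(λ)) = (η/2)·(μ − clip(μ, 1−β, β))²·‖θ*_adv − θ*_real‖²`,
where `clip(x, a, b) = max(a, min(b, x))`. -/
theorem equal_curvature_suboptimality_gap
    {F : Type*} [NormedAddCommGroup F] [InnerProductSpace ℝ F]
    (θadv θreal : F) (Cadv Creal η : ℝ) (hη : 0 < η)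
    (R_adv R_real : F → ℝ)
    (hRadv : R_adv = fun θ => Cadv - (η / 2) * ‖θ - θadv‖ ^ 2)
    (hRreal : R_real = fun θ => Creal - (η / 2) * ‖θ - θreal‖ ^ 2)
    (β μ : ℝ) (hβ : β ∈ Set.Ioc (1 / 2 : ℝ) 1) (hμ : μ ∈ Set.Icc (0 : ℝ) 1)
    (Rμ : F → ℝ) (hRμ : Rμ = fun θ => μ * R_adv θ + (1 - μ) * R_real θ)
    (θ₁ θ₂ θhat : F)
    (hθ₁ : θ₁ = β • θadv + (1 - β) • θreal)
    (hθ₂ : θ₂ = (1 - β) • θadv + β • θreal)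
    (hθhat : θhat = μ • θadv + (1 - μ) • θreal)
    (Θ : ℝ → F) (hΘ : Θ = fun l => (1 - l) • θ₂ + l • θ₁) :
    ∃ M : ℝ, IsGreatest ((fun l => Rμ (Θ l)) '' Set.Icc (0 : ℝ) 1) M ∧
      Rμ θhat - M =
        (η / 2) * (μ - max (1 - β) (min β μ)) ^ 2 * ‖θadv - θreal‖ ^ 2 := by
  obtain ⟨hβ1, hβ2⟩ := hβ
  obtain ⟨hμ0, hμ1⟩ := hμ
  subst hRadv hRreal hRμ hθ₁ hθ₂ hθhat hΘ
  have hD0 : (0:ℝ) ≤ ‖θadv - θreal‖ ^ 2 := by positivity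
  set c : ℝ := max (1 - β) (min β μ) with hc
  have hβ' : (0:ℝ) < 2 * β - 1 := by linarith
  set l₀ : ℝ := (c - (1 - β)) / (2 * β - 1) with hl₀
  have hc1 : 1 - β ≤ c := le_max_left _ _
  have hc2 : c ≤ β := by
    apply max_le (by linarith) (min_le_left _ _)
  have hl₀mem : l₀ ∈ Set.Icc (0:ℝ) 1 := by
    constructor
    · apply div_nonneg <;> linarith
    · rw [hl₀, div_le_one hβ']; linarith
  have hs₀ : (1 - β) + l₀ * (2 * β - 1) = c := by
    rw [hl₀, div_mul_cancel₀ _ (ne_of_gt hβ')]; ring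
  have key : ∀ l : ℝ,
      (μ * (Cadv - η / 2 * ‖(μ • θadv + (1 - μ) • θreal) - θadv‖ ^ 2) +
        (1 - μ) * (Creal - η / 2 * ‖(μ • θadv + (1 - μ) • θreal) - θreal‖ ^ 2)) -
      (μ * (Cadv - η / 2 * ‖((1 - l) • ((1 - β) • θadv + β • θreal) + l • (β • θadv + (1 - β) • θreal)) - θadv‖ ^ 2) +
        (1 - μ) * (Creal - η / 2 * ‖((1 - l) • ((1 - β) • θadv + β • θreal) + l • (β • θadv + (1 - β) • θreal)) - θreal‖ ^ 2)) =
      (η / 2) * ((1 - β) + l * (2 * β - 1) - μ) ^ 2 * ‖θadv - θreal‖ ^ 2 := by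
    intro l
    have e1 : ((1 - l) • ((1 - β) • θadv + β • θreal) + l • (β • θadv + (1 - β) • θreal)) - θadv
        = ((1 - β) + l * (2 * β - 1) - 1) • (θadv - θreal) := by module
    have e2 : ((1 - l) • ((1 - β) • θadv + β • θreal) + l • (β • θadv + (1 - β) • θreal)) - θreal
        = ((1 - β) + l * (2 * β - 1)) • (θadv - θreal) := by module
    have e3 : (μ • θadv + (1 - μ) • θreal) - θadv = (μ - 1) • (θadv - θreal) := by module
    have e4 : (μ • θadv + (1 - μ) • θreal) - θreal = μ • (θadv - θreal) := by module
    rw [e1, e2, e3, e4, norm_smul, norm_smul, norm_smul, norm_smul]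
    simp only [Real.norm_eq_abs, mul_pow, sq_abs]
    ring
  have clipmin : ∀ s : ℝ, 1 - β ≤ s → s ≤ β → (c - μ) ^ 2 ≤ (s - μ) ^ 2 := by
    intro s hs1 hs2
    rcases le_total μ (1 - β) with h | h
    · have hcv : c = 1 - β := by
        rw [hc, min_eq_right (by linarith), max_eq_left (by linarith)]
      rw [hcv]; nlinarith
    rcases le_total β μ with h' | h'
    · have hcv : c = β := by
        rw [hc, min_eq_left h', max_eq_right (by linarith)]
      rw [hcv]; nlinarith
    · have hcv : c = μ := by
        rw [hc, min_eq_right h', max_eq_right (by linarith)]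
      rw [hcv]; nlinarith
  refine ⟨_, ⟨⟨l₀, hl₀mem, rfl⟩, ?_⟩, ?_⟩
  · rintro x ⟨l, ⟨hl0, hl1⟩, rfl⟩
    simp only
    have hs : 1 - β ≤ (1 - β) + l * (2 * β - 1) ∧ (1 - β) + l * (2 * β - 1) ≤ β := by
      constructor
      · nlinarith [mul_nonneg hl0 hβ'.le]
      · nlinarith [mul_le_mul_of_nonneg_right hl1 hβ'.le]
    have h1 := key l
    have h2 := key l₀
    rw [hs₀] at h2
    have hmono : (η / 2) * (c - μ) ^ 2 * ‖θadv - θreal‖ ^ 2 ≤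
        (η / 2) * ((1 - β) + l * (2 * β - 1) - μ) ^ 2 * ‖θadv - θreal‖ ^ 2 := by
      apply mul_le_mul_of_nonneg_right _ hD0
      exact mul_le_mul_of_nonneg_left (clipmin _ hs.1 hs.2) (by linarith)
    linarith only [h1, h2, hmono]
  · have h2 := key l₀
    rw [hs₀] at h2
    simp only
    rw [h2]; ring
end

section
/- Let g : ℝ → ℝ be twice continuously differentiable on [0,1] and let α ∈ [0,1]. Then the gap between the linear interpolation of endpoint values and the value at the interpolated point admits the integral representation (1−α)·g(0) + α·g(1) − g(α) = ∫₀¹ g''(τ) · w_α(τ) dτ, where w_α(τ) = min((1−α)·τ, α·(1−τ)) is the triangular weight function. -/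
open MeasureTheory intervalIntegral

/-- Integral representation of the interpolation gap: if `g : ℝ → ℝ` is twice continuously
differentiable on `[0,1]` (with first derivative `g'` and continuous second derivative `g''`)
and `α ∈ [0,1]`, then
`(1−α)·g(0) + α·g(1) − g(α) = ∫₀¹ g''(τ) · min((1−α)·τ, α·(1−τ)) dτ`. -/
theorem interpolation_gap_integral_representation
    (g g' g'' : ℝ → ℝ)
    (hg : ∀ τ ∈ Set.Icc (0 : ℝ) 1, HasDerivAt g (g' τ) τ)
    (hg' : ∀ τ ∈ Set.Icc (0 : ℝ) 1, HasDerivAt g' (g'' τ) τ)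
    (hg'' : ContinuousOn g'' (Set.Icc (0 : ℝ) 1))
    (α : ℝ) (hα : α ∈ Set.Icc (0 : ℝ) 1) :
    (1 - α) * g 0 + α * g 1 - g α =
      ∫ τ in (0 : ℝ)..1, g'' τ * min ((1 - α) * τ) (α * (1 - τ)) := by
  obtain ⟨hα0, hα1⟩ := hα
  have hsub1 : Set.uIcc (0:ℝ) α ⊆ Set.Icc 0 1 := by
    rw [Set.uIcc_of_le hα0]; exact Set.Icc_subset_Icc le_rfl hα1
  have hsub2 : Set.uIcc α (1:ℝ) ⊆ Set.Icc 0 1 := by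
    rw [Set.uIcc_of_le hα1]; exact Set.Icc_subset_Icc hα0 le_rfl
  have hcg' : ContinuousOn g' (Set.Icc (0:ℝ) 1) :=
    fun τ hτ => (hg' τ hτ).continuousAt.continuousWithinAt
  have hcf : ContinuousOn (fun τ => g'' τ * min ((1 - α) * τ) (α * (1 - τ)))
      (Set.Icc (0:ℝ) 1) := by
    apply hg''.mul
    exact ((continuous_const.mul continuous_id).min
      (continuous_const.mul (continuous_const.sub continuous_id))).continuousOn
  -- split the integral at α
  have hsplit :
      (∫ τ in (0:ℝ)..1, g'' τ * min ((1 - α) * τ) (α * (1 - τ))) =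
      (∫ τ in (0:ℝ)..α, g'' τ * min ((1 - α) * τ) (α * (1 - τ))) +
      (∫ τ in α..(1:ℝ), g'' τ * min ((1 - α) * τ) (α * (1 - τ))) :=
    (intervalIntegral.integral_add_adjacent_intervals
      ((hcf.mono hsub1).intervalIntegrable) ((hcf.mono hsub2).intervalIntegrable)).symm
  have hpiece1 :
      (∫ τ in (0:ℝ)..α, g'' τ * min ((1 - α) * τ) (α * (1 - τ))) =
      (1 - α) * ∫ τ in (0:ℝ)..α, τ * g'' τ := by
    rw [← intervalIntegral.integral_const_mul]
    apply intervalIntegral.integral_congr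
    intro τ hτ
    rw [Set.uIcc_of_le hα0] at hτ
    have hmin : min ((1 - α) * τ) (α * (1 - τ)) = (1 - α) * τ :=
      min_eq_left (by nlinarith [hτ.1, hτ.2])
    simp only [hmin]; ring
  have hpiece2 :
      (∫ τ in α..(1:ℝ), g'' τ * min ((1 - α) * τ) (α * (1 - τ))) =
      α * ∫ τ in α..(1:ℝ), (1 - τ) * g'' τ := by
    rw [← intervalIntegral.integral_const_mul]
    apply intervalIntegral.integral_congr
    intro τ hτ
    rw [Set.uIcc_of_le hα1] at hτ
    have hmin : min ((1 - α) * τ) (α * (1 - τ)) = α * (1 - τ) :=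
      min_eq_right (by nlinarith [hτ.1, hτ.2])
    simp only [hmin]; ring
  -- integration by parts on [0, α]
  have hibp1 : (∫ τ in (0:ℝ)..α, τ * g'' τ) =
      α * g' α - 0 * g' 0 - ∫ τ in (0:ℝ)..α, 1 * g' τ := by
    exact intervalIntegral.integral_mul_deriv_eq_deriv_mul
      (fun x _ => hasDerivAt_id x)
      (fun x hx => hg' x (hsub1 hx))
      intervalIntegrable_const
      ((hg''.mono hsub1).intervalIntegrable)
  -- integration by parts on [α, 1]
  have hibp2 : (∫ τ in α..(1:ℝ), (1 - τ) * g'' τ) =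
      (1 - 1) * g' 1 - (1 - α) * g' α - ∫ τ in α..(1:ℝ), (-1) * g' τ := by
    exact intervalIntegral.integral_mul_deriv_eq_deriv_mul
      (fun x _ => (hasDerivAt_id x).const_sub 1)
      (fun x hx => hg' x (hsub2 hx))
      intervalIntegrable_const
      ((hg''.mono hsub2).intervalIntegrable)
  have hFTC1 : (∫ τ in (0:ℝ)..α, g' τ) = g α - g 0 :=
    intervalIntegral.integral_eq_sub_of_hasDerivAt (fun x hx => hg x (hsub1 hx))
      ((hcg'.mono hsub1).intervalIntegrable)
  have hFTC2 : (∫ τ in α..(1:ℝ), g' τ) = g 1 - g α :=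
    intervalIntegral.integral_eq_sub_of_hasDerivAt (fun x hx => hg x (hsub2 hx))
      ((hcg'.mono hsub2).intervalIntegrable)
  have e1 : (∫ τ in (0:ℝ)..α, 1 * g' τ) = g α - g 0 := by
    simpa using hFTC1
  have e2 : (∫ τ in α..(1:ℝ), (-1) * g' τ) = -(g 1 - g α) := by
    rw [intervalIntegral.integral_const_mul, hFTC2]; ring
  rw [hsplit, hpiece1, hpiece2, hibp1, hibp2, e1, e2]
  ring
end
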